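/- Let t be a selfadjoint regular operator on a Hilbert C*-module E and s a selfadjoint regular operator with D(t) ⊆ D(s) satisfying ||s(x)|| ≤ ε(||(t+s)(x)|| + ||x||) for all x ∈ D(t), where ε > 0 and t+s is selfadjoint regular. Then the bounded adjointable operator s(t+s+i)^{-1} has norm at most 5ε. -/

import Mathlib

/-! Framework: unbounded (regular) operators on Hilbert C⋆-modules, bounded adjointable
operators, compact operators, Fredholm operators, Cayley and bounded transforms. -/

open scoped RightActions InnerProductSpace

noncomputable section

namespace RegularFredholm

/-- An unbounded operator on `E`: a (not necessarily closed) domain together with a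
linear map into `E`. -/
structure UnboundedOp (A : Type*) [NonUnitalCStarAlgebra A] [PartialOrder A]
    [StarOrderedRing A] (E : Type*) [NormedAddCommGroup E] [NormedSpace ℂ E]
    [SMul A E] [CStarModule A E] where
  dom : Submodule ℂ E
  toFun : dom →ₗ[ℂ] E

section Defs

variable {A : Type*} [NonUnitalCStarAlgebra A] [PartialOrder A] [StarOrderedRing A]
variable {E : Type*} [NormedAddCommGroup E] [NormedSpace ℂ E] [SMul A E] [CStarModule A E]

namespace UnboundedOp

variable (t s : UnboundedOp A E)

/-- Application of an unbounded operator at a point of its domain. -/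
def app (x : E) (hx : x ∈ t.dom) : E := t.toFun ⟨x, hx⟩

/-- `t` is densely defined. -/
def DenselyDefined : Prop := Dense (t.dom : Set E)

/-- The graph of `t` as a subset of `E × E`. -/
def graph : Set (E × E) := {p | ∃ hx : p.1 ∈ t.dom, t.app p.1 hx = p.2}

/-- `t` is a closed operator. -/
def IsClosedOp : Prop := IsClosed t.graph

/-- `t'` is the adjoint of `t`: it is a formal adjoint which is maximal among formal
adjoints. -/
def IsAdjoint (t' : UnboundedOp A E) : Prop :=
  (∀ x (hx : x ∈ t.dom) y (hy : y ∈ t'.dom),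
      (⟪t.app x hx, y⟫_A : A) = ⟪x, t'.app y hy⟫_A) ∧
  ∀ y z : E, (∀ x (hx : x ∈ t.dom), (⟪t.app x hx, y⟫_A : A) = ⟪x, z⟫_A) →
    ∃ hy : y ∈ t'.dom, t'.app y hy = z

/-- `t` is a regular operator with adjoint `t'`: it is closed, densely defined, has
densely defined adjoint `t'`, and `1 + t'∘t` (i.e. `1 + t⋆t`) has dense range. -/
def IsRegularPair (t' : UnboundedOp A E) : Prop :=
  t.DenselyDefined ∧ t.IsClosedOp ∧ t.IsAdjoint t' ∧ t'.DenselyDefined ∧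
    Dense {y : E | ∃ (x : E) (hx : x ∈ t.dom) (hx' : t.app x hx ∈ t'.dom),
      y = x + t'.app (t.app x hx) hx'}

/-- `t` is a selfadjoint regular operator. -/
def IsSelfAdjointRegular : Prop := t.IsRegularPair t

/-- The sum of an unbounded operator and a bounded operator, with the same domain. -/
def addBounded (D : E →L[ℂ] E) : UnboundedOp A E where
  dom := t.dom
  toFun := t.toFun + (D : E →ₗ[ℂ] E) ∘ₗ t.dom.subtype

/-- The sum of two unbounded operators, with domain the intersection of the domains. -/
def add : UnboundedOp A E where
  dom := t.dom ⊓ s.dom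
  toFun := t.toFun ∘ₗ Submodule.inclusion inf_le_left +
    s.toFun ∘ₗ Submodule.inclusion inf_le_right

/-- A bounded operator regarded as an unbounded operator with full domain. -/
def ofCLM (T : E →L[ℂ] E) : UnboundedOp A E where
  dom := ⊤
  toFun := (T : E →ₗ[ℂ] E) ∘ₗ (⊤ : Submodule ℂ E).subtype

/-- `R` is the (two-sided) inverse of `t + c` for a scalar `c`, i.e. `R = (t + c)⁻¹`. -/
def IsResolvent (c : ℂ) (R : E →L[ℂ] E) : Prop :=
  (∀ x : E, ∃ h : R x ∈ t.dom, t.app (R x) h + c • R x = x) ∧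
  ∀ x (hx : x ∈ t.dom), R (t.app x hx + c • x) = x

/-- `R` is the (two-sided) inverse of `1 + t'∘t`, i.e. `R = (1 + t⋆t)⁻¹`
(for `t` with adjoint `t'`). -/
def IsResolventSq (t' : UnboundedOp A E) (R : E →L[ℂ] E) : Prop :=
  (∀ x : E, ∃ (h : R x ∈ t.dom) (h' : t.app (R x) h ∈ t'.dom),
      t'.app (t.app (R x) h) h' + R x = x) ∧
  ∀ x (hx : x ∈ t.dom) (hx' : t.app x hx ∈ t'.dom),
    R (x + t'.app (t.app x hx) hx') = x

/-- `C` is the Cayley transform of `t`, namely `C = (t - i)(t + i)⁻¹`. -/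
def IsCayley (C : E →L[ℂ] E) : Prop :=
  ∃ R : E →L[ℂ] E, t.IsResolvent Complex.I R ∧
    ∀ x : E, ∃ h : R x ∈ t.dom, C x = t.app (R x) h - Complex.I • R x

/-- `Q` is the operator `(1 + t⋆t)^(-1/2)` (with `t'` the adjoint of `t`): `Q` is a
positive selfadjoint bounded operator whose square is the inverse of `1 + t'∘t`. -/
def IsSqrtResolvent (t' : UnboundedOp A E) (Q : E →L[ℂ] E) : Prop :=
  (∀ x y : E, (⟪Q x, y⟫_A : A) = ⟪x, Q y⟫_A) ∧ (∀ x : E, (0 : A) ≤ ⟪x, Q x⟫_A) ∧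
    t.IsResolventSq t' (Q.comp Q)

/-- `F` is the bounded transform `t ∘ Q` of `t`, where `Q = (1 + t⋆t)^(-1/2)`. -/
def IsBoundedTransform (Q F : E →L[ℂ] E) : Prop :=
  ∀ x : E, ∃ h : Q x ∈ t.dom, F x = t.app (Q x) h

end UnboundedOp

end Defs

section BoundedDefs

variable (A : Type*) [NonUnitalCStarAlgebra A] [PartialOrder A] [StarOrderedRing A]
variable {E : Type*} [NormedAddCommGroup E] [NormedSpace ℂ E] [SMul A E] [CStarModule A E]

/-- `S` is an adjoint for the bounded operator `T`. -/
def IsAdjointableB (T S : E →L[ℂ] E) : Prop :=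
  ∀ x y : E, (⟪T x, y⟫_A : A) = ⟪x, S y⟫_A

/-- `T` is a bounded adjointable operator. -/
def Adjointable (T : E →L[ℂ] E) : Prop := ∃ S : E →L[ℂ] E, IsAdjointableB A T S

/-- `T` is a "rank one" operator `θ_{x,y} : z ↦ x • ⟪y, z⟫`. -/
def IsRankOne (T : E →L[ℂ] E) : Prop :=
  ∃ x y : E, ∀ z : E, T z = (⟪y, z⟫_A : A) • x

/-- `T` is a compact operator: it belongs to the closed linear span of the rank one
operators. -/
def IsCompactOp (T : E →L[ℂ] E) : Prop :=
  T ∈ closure (Submodule.span ℂ {S : E →L[ℂ] E | IsRankOne A S} : Set (E →L[ℂ] E))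

/-- `T` is a Fredholm bounded adjointable operator: `T` is adjointable and invertible
modulo the compact operators. -/
def IsFredholmB (T : E →L[ℂ] E) : Prop :=
  Adjointable A T ∧ ∃ G : E →L[ℂ] E, Adjointable A G ∧
    IsCompactOp A (G * T - 1) ∧ IsCompactOp A (T * G - 1)

/-- `U` is a unitary element of the bounded adjointable operators. -/
def IsUnitaryB (U : E →L[ℂ] E) : Prop :=
  ∃ U' : E →L[ℂ] E, IsAdjointableB A U U' ∧ U' * U = 1 ∧ U * U' = 1

end BoundedDefs

section MoreDefs

variable {A : Type*} [NonUnitalCStarAlgebra A] [PartialOrder A] [StarOrderedRing A]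
variable {E : Type*} [NormedAddCommGroup E] [NormedSpace ℂ E] [SMul A E] [CStarModule A E]

/-- A regular operator `t` (with adjoint `t'`) is Fredholm if its bounded transform
`F_t = t (1 + t⋆t)^(-1/2)` is a Fredholm bounded adjointable operator. -/
def UnboundedOp.IsFredholm (t t' : UnboundedOp A E) : Prop :=
  ∃ Q F : E →L[ℂ] E, t.IsSqrtResolvent t' Q ∧ t.IsBoundedTransform Q F ∧ IsFredholmB A F

/-- `s` is relatively `t`-compact: the map `s : E(t) → E`, where `E(t)` is the domain of
`t` equipped with the graph inner product `⟪x,y⟫ + ⟪t x, t y⟫`, lies in the closed linear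
span of the rank one operators `E(t) → E`; i.e. it can be approximated, in the operator
norm for maps `E(t) → E`, by finite sums of operators
`θ_{x,y} : z ↦ x • (⟪y, z⟫ + ⟪t y, t z⟫)` with `x ∈ E`, `y ∈ E(t)`. -/
def IsRelativelyCompact (t s : UnboundedOp A E) (hsub : t.dom ≤ s.dom) : Prop :=
  ∀ ε > (0 : ℝ), ∃ (n : ℕ) (x : Fin n → E) (y : Fin n → E) (hy : ∀ i, y i ∈ t.dom),
    ∀ z (hz : z ∈ t.dom),
      ‖s.app z (hsub hz) - ∑ i,
          ((⟪y i, z⟫_A : A) + ⟪t.app (y i) (hy i), t.app z hz⟫_A) • x i‖ ≤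
        ε * Real.sqrt ‖(⟪z, z⟫_A : A) + ⟪t.app z hz, t.app z hz⟫_A‖

/-- The graph of `t` inside the Hilbert C⋆-module `E ⊕ E`. -/
def graphSet (t : UnboundedOp A E) : Set (WithCStarModule A (E × E)) :=
  {p | ∃ hx : (WithCStarModule.equiv A (E × E) p).1 ∈ t.dom,
    t.app (WithCStarModule.equiv A (E × E) p).1 hx = (WithCStarModule.equiv A (E × E) p).2}

/-- `P` is the orthogonal projection of `E ⊕ E` onto the graph of `t`: a selfadjoint
idempotent whose range is the graph of `t`.  The gap metric between regular operators
`t`, `s` is `‖P_{G(t)} - P_{G(s)}‖` for the associated graph projections. -/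
def IsGraphProjection (t : UnboundedOp A E)
    (P : WithCStarModule A (E × E) →L[ℂ] WithCStarModule A (E × E)) : Prop :=
  IsAdjointableB A P P ∧ P * P = P ∧ Set.range P = graphSet t

end MoreDefs

variable {A : Type*} [NonUnitalCStarAlgebra A] [PartialOrder A] [StarOrderedRing A]
variable {E : Type*} [NormedAddCommGroup E] [NormedSpace ℂ E] [SMul A E] [CStarModule A E]

/-! For `y = (t + s + i)⁻¹ x` the symmetry of `t + s` makes the cross terms cancel in
`⟪(t + s) y + i y, (t + s) y + i y⟫ = ⟪(t + s) y, (t + s) y⟫ + ⟪y, y⟫`, so both `‖(t + s) y‖`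
and `‖y‖` are at most `‖x‖`, and the relative bound gives `‖s y‖ ≤ 2 ε ‖x‖`. -/

theorem CStarModule.norm_le_norm_of_inner_self_le {x z : E} (h : ⟪x, x⟫_A ≤ ⟪z, z⟫_A) :
    ‖x‖ ≤ ‖z‖ := by
  rw [CStarModule.norm_eq_sqrt_norm_inner_self (A := A) (x := x),
    CStarModule.norm_eq_sqrt_norm_inner_self (A := A) (x := z)]
  exact Real.sqrt_le_sqrt
    (CStarAlgebra.norm_le_norm_of_nonneg_of_le CStarModule.inner_self_nonneg h)

section SymmetricPair

variable {u y : E} (hsymm : ⟪u, y⟫_A = ⟪y, u⟫_A)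
include hsymm

omit [StarOrderedRing A] in
theorem CStarModule.inner_add_I_smul_self_of_inner_comm :
    ⟪u + Complex.I • y, u + Complex.I • y⟫_A = ⟪u, u⟫_A + ⟪y, y⟫_A := by
  simp only [CStarModule.inner_add_left, CStarModule.inner_add_right,
    CStarModule.inner_smul_left_complex, CStarModule.inner_smul_right_complex, hsymm,
    Complex.star_def, Complex.conj_I]
  match_scalars <;> simp

theorem CStarModule.norm_left_le_norm_add_I_smul_of_inner_comm : ‖u‖ ≤ ‖u + Complex.I • y‖ :=
  CStarModule.norm_le_norm_of_inner_self_le (A := A) <| by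
    rw [CStarModule.inner_add_I_smul_self_of_inner_comm hsymm]
    exact le_add_of_nonneg_right CStarModule.inner_self_nonneg

theorem CStarModule.norm_right_le_norm_add_I_smul_of_inner_comm : ‖y‖ ≤ ‖u + Complex.I • y‖ :=
  CStarModule.norm_le_norm_of_inner_self_le (A := A) <| by
    rw [CStarModule.inner_add_I_smul_self_of_inner_comm hsymm]
    exact le_add_of_nonneg_left CStarModule.inner_self_nonneg

end SymmetricPair

namespace UnboundedOp

def IsSymmetric (t : UnboundedOp A E) : Prop :=
  ∀ x (hx : x ∈ t.dom) y (hy : y ∈ t.dom), ⟪t.app x hx, y⟫_A = ⟪x, t.app y hy⟫_A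

theorem IsAdjoint.isSymmetric {t : UnboundedOp A E} (ht : t.IsAdjoint t) : t.IsSymmetric :=
  ht.1

variable {t : UnboundedOp A E} {R : E →L[ℂ] E}

theorem IsSymmetric.norm_resolvent_I_le (ht : t.IsSymmetric)
    (hR : t.IsResolvent Complex.I R) (x : E) : ‖R x‖ ≤ ‖x‖ := by
  obtain ⟨hRx, hx⟩ := hR.1 x
  simpa only [hx] using
    CStarModule.norm_right_le_norm_add_I_smul_of_inner_comm (A := A) (ht _ hRx _ hRx)

theorem IsSymmetric.norm_app_resolvent_I_le (ht : t.IsSymmetric)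
    (hR : t.IsResolvent Complex.I R) (x : E) (hRx : R x ∈ t.dom) :
    ‖t.app (R x) hRx‖ ≤ ‖x‖ := by
  obtain ⟨_, hx⟩ := hR.1 x
  simpa only [hx] using
    CStarModule.norm_left_le_norm_add_I_smul_of_inner_comm (A := A) (ht _ hRx _ hRx)

end UnboundedOp

theorem norm_comp_resolvent_le_five_mul_general
    (t s : UnboundedOp A E)
    (hsub : t.dom ≤ s.dom) (hts : (t.add s).IsSelfAdjointRegular)
    (ε : ℝ) (hε : 0 < ε)
    (hbound : ∀ x (hx : x ∈ t.dom), ‖s.app x (hsub hx)‖ ≤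
      ε * (‖(t.add s).app x (Submodule.mem_inf.mpr ⟨hx, hsub hx⟩)‖ + ‖x‖))
    (R B : E →L[ℂ] E) (hR : (t.add s).IsResolvent Complex.I R)
    (hB : ∀ x : E, ∃ h : R x ∈ s.dom, B x = s.app (R x) h) :
    ‖B‖ ≤ 5 * ε := by
  have hsymm : (t.add s).IsSymmetric := hts.2.2.1.isSymmetric
  refine B.opNorm_le_bound (by positivity) fun x => ?_
  obtain ⟨_, hBx⟩ := hB x
  obtain ⟨hRx, -⟩ := hR.1 x
  calc ‖B x‖ ≤ ε * (‖(t.add s).app (R x) hRx‖ + ‖R x‖) := hBx ▸ hbound (R x) hRx.1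
    _ ≤ ε * (‖x‖ + ‖x‖) := by
      gcongr
      exacts [hsymm.norm_app_resolvent_I_le hR x hRx, hsymm.norm_resolvent_I_le hR x]
    _ ≤ 5 * ε * ‖x‖ := by nlinarith [norm_nonneg x]

/-- Under the relative bound `‖s x‖ ≤ ε (‖(t+s) x‖ + ‖x‖)` on `D(t)`,
the bounded adjointable operator `s (t + s + i)⁻¹` has norm at most `5 ε`. -/
theorem norm_comp_resolvent_le_five_mul
    (t s : UnboundedOp A E) (ht : t.IsSelfAdjointRegular) (hs : s.IsSelfAdjointRegular)
    (hsub : t.dom ≤ s.dom) (hts : (t.add s).IsSelfAdjointRegular)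
    (ε : ℝ) (hε : 0 < ε)
    (hbound : ∀ x (hx : x ∈ t.dom), ‖s.app x (hsub hx)‖ ≤
      ε * (‖(t.add s).app x (Submodule.mem_inf.mpr ⟨hx, hsub hx⟩)‖ + ‖x‖))
    (R B : E →L[ℂ] E) (hR : (t.add s).IsResolvent Complex.I R)
    (hB : ∀ x : E, ∃ h : R x ∈ s.dom, B x = s.app (R x) h) :
    ‖B‖ ≤ 5 * ε :=
  norm_comp_resolvent_le_five_mul_general t s hsub hts ε hε hbound R B hR hB

end RegularFredholm
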